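/- For x = (x₁,x₂,x₃) with r = ‖x‖ and x₁ ≥ 0, r > 0, set R² = (r + x₁)/2 and define v(θ) = (R sinθ, (x₂ sinθ - x₃ cosθ)/(2R), (x₂ cosθ + x₃ sinθ)/(2R), -R cosθ). Then K(v(θ)) = (x₁, x₂, x₃, 0) for every θ; i.e. the explicit inverse map lands in the correct fiber. -/

import Mathlib

open Matrix Real

/-- The KS matrix `L(u)`. -/
noncomputable def KSL (u : EuclideanSpace ℝ (Fin 4)) : Matrix (Fin 4) (Fin 4) ℝ :=
  !![u 0, -u 1, -u 2, u 3;
     u 1,  u 0, -u 3, -u 2;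
     u 2,  u 3,  u 0,  u 1;
     u 3, -u 2,  u 1, -u 0]

/-- The KS map `K(u) = L(u) u`. -/
noncomputable def KSmap (u : EuclideanSpace ℝ (Fin 4)) : EuclideanSpace ℝ (Fin 4) :=
  WithLp.toLp 2 ((KSL u).mulVec u)

/-- The fiber rotation matrix `R(ϑ)`. -/
noncomputable def KSR (θ : ℝ) : Matrix (Fin 4) (Fin 4) ℝ :=
  !![Real.cos θ, 0, 0, -Real.sin θ;
     0, Real.cos θ, Real.sin θ, 0;
     0, -Real.sin θ, Real.cos θ, 0;
     Real.sin θ, 0, 0, Real.cos θ]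

/-- The bilinear relation `ℓ(u,w) = u₁w₄ - u₂w₃ + u₃w₂ - u₄w₁`. -/
noncomputable def KSbilin (u w : EuclideanSpace ℝ (Fin 4)) : ℝ :=
  u 0 * w 3 - u 1 * w 2 + u 2 * w 1 - u 3 * w 0

theorem KSmap_eq (u : EuclideanSpace ℝ (Fin 4)) :
    KSmap u = WithLp.toLp 2 ![u 0 ^ 2 - u 1 ^ 2 - u 2 ^ 2 + u 3 ^ 2,
      2 * (u 0 * u 1 - u 2 * u 3), 2 * (u 0 * u 2 + u 1 * u 3), 0] := by
  ext i
  fin_cases i <;> simp [KSmap, KSL, dotProduct, Fin.sum_univ_four] <;> ring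

theorem KSmap_fiber_circle (x₂ x₃ R θ : ℝ) (hR : R ≠ 0) :
    KSmap (WithLp.toLp 2 ![R * sin θ, (x₂ * sin θ - x₃ * cos θ) / (2 * R),
        (x₂ * cos θ + x₃ * sin θ) / (2 * R), -R * cos θ] : EuclideanSpace ℝ (Fin 4)) =
      (WithLp.toLp 2 ![R ^ 2 - (x₂ ^ 2 + x₃ ^ 2) / (4 * R ^ 2), x₂, x₃, 0] :
        EuclideanSpace ℝ (Fin 4)) := by
  have hsc := sin_sq_add_cos_sq θ
  rw [KSmap_eq]
  congr 1
  ext i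
  fin_cases i <;> simp <;> field_simp
  · linear_combination 4 * (4 * R ^ 4 - x₂ ^ 2 - x₃ ^ 2) * hsc
  · linear_combination x₂ * hsc
  · linear_combination x₃ * hsc

/-- Since `x₂² + x₃² = r² - x₁² = (r - x₁)(r + x₁)`, the correction term equals `(r - x₁) / 2`. -/
theorem sq_sub_div_four_mul_sq_eq (x₁ x₂ x₃ r R : ℝ) (hr : r ^ 2 = x₁ ^ 2 + x₂ ^ 2 + x₃ ^ 2)
    (hR : R ^ 2 = (r + x₁) / 2) (hrx : r + x₁ ≠ 0) :
    R ^ 2 - (x₂ ^ 2 + x₃ ^ 2) / (4 * R ^ 2) = x₁ := by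
  rw [hR]
  field_simp
  linear_combination 4 * hr

theorem ks_inverse_map_in_fiber (x₁ x₂ x₃ r R θ : ℝ)
    (hr : r = Real.sqrt (x₁ ^ 2 + x₂ ^ 2 + x₃ ^ 2))
    (hx : 0 ≤ x₁) (hrpos : 0 < r)
    (hR : R = Real.sqrt ((r + x₁) / 2)) :
    KSmap (WithLp.toLp 2 ![R * Real.sin θ, (x₂ * Real.sin θ - x₃ * Real.cos θ) / (2 * R),
        (x₂ * Real.cos θ + x₃ * Real.sin θ) / (2 * R), -R * Real.cos θ] :
      EuclideanSpace ℝ (Fin 4)) = (WithLp.toLp 2 ![x₁, x₂, x₃, 0] : EuclideanSpace ℝ (Fin 4)) := by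
  have hrx : 0 < r + x₁ := by linarith
  have hR2 : R ^ 2 = (r + x₁) / 2 := by rw [hR, sq_sqrt (by linarith)]
  have hr2 : r ^ 2 = x₁ ^ 2 + x₂ ^ 2 + x₃ ^ 2 := by rw [hr, sq_sqrt (by positivity)]
  have hRpos : 0 < R := hR ▸ sqrt_pos.mpr (by linarith)
  rw [KSmap_fiber_circle x₂ x₃ R θ hRpos.ne',
    sq_sub_div_four_mul_sq_eq x₁ x₂ x₃ r R hr2 hR2 hrx.ne']
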